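/- arXiv:1611.05917 — 4 statements merged into one kernel-verified Lean document; each statement's English description precedes it below -/
import Mathlib

section
/- Let f : ℝⁿ → ℝ≥0 be an upper semicontinuous quasiconcave probability density (∫ f = 1). Then there exists α > 0 such that the level set {θ : f(θ) ≥ α} is nonempty, compact, and has nonempty interior; in particular f attains its maximum. -/
open MeasureTheory Filter Topology Metric Set
open scoped ENNReal NNReal

lemma aux_usc_max {E : Type*} [TopologicalSpace E] {f : E → ℝ}
    (h : UpperSemicontinuous f) {K : Set E} (hK : IsCompact K) (hne : K.Nonempty) :
    ∃ θ ∈ K, ∀ z ∈ K, f z ≤ f θ := by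
  by_contra hcon
  push_neg at hcon
  have hopen : ∀ z : K, IsOpen {y | f y < f (z : E)} :=
    fun z => (upperSemicontinuous_iff_isOpen_preimage.1 h) (f (z : E))
  have hcover : K ⊆ ⋃ z : K, {y | f y < f (z : E)} := by
    intro θ hθ
    obtain ⟨z, hz, hlt⟩ := hcon θ hθ
    exact mem_iUnion.2 ⟨⟨z, hz⟩, hlt⟩
  obtain ⟨t, ht⟩ := hK.elim_finite_subcover _ hopen hcover
  obtain ⟨θ₀, hθ₀⟩ := hne
  have h0 := ht hθ₀
  rw [mem_iUnion₂] at h0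
  obtain ⟨z₀, hz₀t, _⟩ := h0
  obtain ⟨b, hbt, hb⟩ := t.exists_max_image (fun z : K => f (z : E)) ⟨z₀, hz₀t⟩
  have hbK := ht b.2
  rw [mem_iUnion₂] at hbK
  obtain ⟨z, hzt, hlt⟩ := hbK
  exact absurd (hb z hzt) (not_le.2 hlt)

theorem stmt8 {n : ℕ} (f : EuclideanSpace ℝ (Fin n) → ℝ)
    (hnn : ∀ z, 0 ≤ f z) (husc : UpperSemicontinuous f)
    (hq : ∀ x y : EuclideanSpace ℝ (Fin n), ∀ t : ℝ, 0 ≤ t → t ≤ 1 →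
      min (f x) (f y) ≤ f (t • x + (1 - t) • y))
    (hint : Integrable f) (h1 : ∫ z, f z = 1) :
    (∃ α : ℝ, 0 < α ∧ {θ | α ≤ f θ}.Nonempty ∧ IsCompact {θ | α ≤ f θ} ∧
      (interior {θ | α ≤ f θ}).Nonempty) ∧
    ∃ θ, ∀ z, f z ≤ f θ := by
  classical
  -- Step A: some positive level set has positive measure
  have hA : ∃ α : ℝ, 0 < α ∧ volume {θ | α ≤ f θ} ≠ 0 := by
    by_contra hcon
    push_neg at hcon
    have hsub : {z | f z ≠ 0} ⊆ ⋃ k : ℕ, {z | 1/(k+1:ℝ) ≤ f z} := by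
      intro z hz
      have hpos : 0 < f z := lt_of_le_of_ne (hnn z) (Ne.symm hz)
      obtain ⟨k, hk⟩ := exists_nat_one_div_lt hpos
      exact mem_iUnion.2 ⟨k, le_of_lt hk⟩
    have hnull : volume {z | f z ≠ 0} = 0 :=
      measure_mono_null hsub (measure_iUnion_null fun k => hcon _ (by positivity))
    have hae : ∀ᵐ z, f z = (0:ℝ) := by
      rw [ae_iff]; simpa using hnull
    have : ∫ z, f z = 0 := by
      rw [integral_congr_ae (g := fun _ => (0:ℝ)) hae, integral_zero]
    rw [h1] at this
    norm_num at this
  obtain ⟨α, hα, hμ⟩ := hA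
  set K := {θ | α ≤ f θ} with hKdef
  have hKne : K.Nonempty := nonempty_of_measure_ne_zero hμ
  have hKclosed : IsClosed K := by
    rw [← isOpen_compl_iff]
    have h := upperSemicontinuous_iff_isOpen_preimage.1 husc α
    convert h using 1
    ext θ; simp [hKdef, not_le]
  have hKconv : Convex ℝ K := by
    intro x hx y hy a b ha hb hab
    have hb' : b = 1 - a := by linarith
    subst hb'
    exact le_trans (le_min hx hy) (hq x y a ha (by linarith))
  have hKint : (interior K).Nonempty := by
    by_contra hemp
    rw [not_nonempty_iff_eq_empty] at hemp
    have hfr : frontier K = K := by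
      rw [frontier, hKclosed.closure_eq, hemp, diff_empty]
    have h0 := hKconv.addHaar_frontier volume
    rw [hfr] at h0
    exact hμ h0
  -- finiteness of the measure of K
  have hg : AEMeasurable (fun z => ENNReal.ofReal (f z)) volume :=
    hint.aemeasurable.ennreal_ofReal
  have hlin : ∫⁻ z, ENNReal.ofReal (f z) = 1 := by
    rw [← ofReal_integral_eq_lintegral_ofReal hint (Filter.Eventually.of_forall hnn), h1,
      ENNReal.ofReal_one]
  have hset : {x | ENNReal.ofReal α ≤ ENNReal.ofReal (f x)} = K := by
    ext x; simp [hKdef, ENNReal.ofReal_le_ofReal_iff (hnn x)]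
  have hmeas_le : ENNReal.ofReal α * volume K ≤ 1 := by
    have h := mul_meas_ge_le_lintegral₀ hg (ENNReal.ofReal α)
    rw [hlin, hset] at h
    exact h
  have hKfin : volume K ≠ ⊤ := by
    intro htop
    rw [htop, ENNReal.mul_top (ENNReal.ofReal_pos.2 hα).ne'] at hmeas_le
    exact absurd hmeas_le (by simp)
  -- boundedness of K
  have hKbdd : Bornology.IsBounded K := by
    by_contra hub
    rw [isBounded_iff_forall_norm_le] at hub
    push_neg at hub
    obtain ⟨x₀, hx₀⟩ := hKint
    obtain ⟨r, hr, hball⟩ := Metric.isOpen_iff.1 isOpen_interior x₀ hx₀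
    have hballK : ball x₀ r ⊆ K := hball.trans interior_subset
    choose g hgK hgnorm using hub
    let y : ℕ → EuclideanSpace ℝ (Fin n) :=
      fun k => Nat.rec (g 0) (fun _ yk => g (‖yk‖ + 2*r + 2*‖x₀‖)) k
    have hyK : ∀ k, y k ∈ K := by
      intro k; cases k with
      | zero => exact hgK 0
      | succ k => exact hgK _
    have hygrow : ∀ k, ‖y k‖ + 2*r + 2*‖x₀‖ < ‖y (k+1)‖ := fun k => hgnorm _
    set c : ℕ → EuclideanSpace ℝ (Fin n) := fun k => (2:ℝ)⁻¹ • (x₀ + y k) with hcdef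
    have hcval : ∀ k, ‖c k‖ = 2⁻¹ * ‖x₀ + y k‖ := by
      intro k
      show ‖(2:ℝ)⁻¹ • (x₀ + y k)‖ = 2⁻¹ * ‖x₀ + y k‖
      rw [norm_smul]; norm_num
    have hlow : ∀ k, (‖y k‖ - ‖x₀‖)/2 ≤ ‖c k‖ := by
      intro k
      have h1 : ‖y k‖ ≤ ‖x₀ + y k‖ + ‖x₀‖ := by
        have := norm_sub_le (x₀ + y k) x₀
        simpa using this
      have h2 := hcval k
      linarith
    have hhigh : ∀ k, ‖c k‖ ≤ (‖y k‖ + ‖x₀‖)/2 := by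
      intro k
      have h1 := norm_add_le x₀ (y k)
      have h2 := hcval k
      linarith
    have hgap : ∀ k, ‖c k‖ + r ≤ ‖c (k+1)‖ := by
      intro k
      have h1 := hygrow k
      have h2 := hlow (k+1)
      have h3 := hhigh k
      linarith
    have hchain : ∀ j m, ‖c j‖ + r ≤ ‖c (j + (m+1))‖ := by
      intro j m
      induction m with
      | zero => exact hgap j
      | succ m ih =>
        have := hgap (j + (m+1))
        have h4 : j + (m + 1) + 1 = j + (m + 1 + 1) := by ring
        rw [h4] at this
        linarith
    have hfar : ∀ j k, j < k → r ≤ dist (c j) (c k) := by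
      intro j k hjk
      obtain ⟨m, rfl⟩ : ∃ m, k = j + (m+1) :=
        ⟨k - j - 1, by omega⟩
      have h1 := hchain j m
      have h2 : |‖c (j + (m+1))‖ - ‖c j‖| ≤ ‖c (j + (m+1)) - c j‖ :=
        abs_norm_sub_norm_le _ _
      rw [dist_eq_norm]
      have h3 : ‖c (j + (m+1)) - c j‖ = ‖c j - c (j + (m+1))‖ := (norm_sub_rev _ _)
      have h4 : ‖c (j + (m+1))‖ - ‖c j‖ ≤ |‖c (j + (m+1))‖ - ‖c j‖| := le_abs_self _
      linarith
    have hdisj : Pairwise (Function.onFun Disjoint fun k => ball (c k) (r/2)) := by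
      intro j k hjk
      have hd : r/2 + r/2 ≤ dist (c j) (c k) := by
        rcases lt_or_gt_of_ne hjk with h | h
        · have := hfar j k h; linarith
        · have := hfar k j h; rw [dist_comm]; linarith
      exact ball_disjoint_ball hd
    have hsub : ∀ k, ball (c k) (r/2) ⊆ K := by
      intro k z hz
      have hw : (2:ℝ) • z - y k ∈ ball x₀ r := by
        rw [mem_ball, dist_eq_norm] at hz ⊢
        have heq : (2:ℝ) • z - y k - x₀ = (2:ℝ) • (z - c k) := by
          rw [hcdef]; module
        rw [heq, norm_smul, Real.norm_two]
        linarith [hz]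
      have hmem := hKconv (hballK hw) (hyK k)
        (by norm_num : (0:ℝ) ≤ 2⁻¹) (by norm_num : (0:ℝ) ≤ 2⁻¹) (by norm_num)
      have heq2 : (2:ℝ)⁻¹ • ((2:ℝ) • z - y k) + (2:ℝ)⁻¹ • y k = z := by module
      rwa [heq2] at hmem
    have hμball : volume (ball (c 0) (r/2)) ≠ 0 :=
      (measure_ball_pos volume (c 0) (by linarith)).ne'
    have hvol : ∀ k, volume (ball (c k) (r/2)) = volume (ball (c 0) (r/2)) := by
      intro k
      rw [Measure.addHaar_ball_center volume (c k),
        Measure.addHaar_ball_center volume (c 0)]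
    have htop : volume (⋃ k, ball (c k) (r/2)) = ⊤ := by
      rw [measure_iUnion hdisj fun k => measurableSet_ball]
      calc ∑' k, volume (ball (c k) (r/2))
          = ∑' _ : ℕ, volume (ball (c 0) (r/2)) := by
            exact tsum_congr hvol
        _ = ⊤ := ENNReal.tsum_const_eq_top_of_ne_zero hμball
    have hle : volume (⋃ k, ball (c k) (r/2)) ≤ volume K :=
      measure_mono (iUnion_subset hsub)
    rw [htop, top_le_iff] at hle
    exact hKfin hle
  have hKcompact : IsCompact K := Metric.isCompact_of_isClosed_isBounded hKclosed hKbdd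
  obtain ⟨θ, hθK, hθmax⟩ := aux_usc_max husc hKcompact hKne
  refine ⟨⟨α, hα, hKne, hKcompact, hKint⟩, θ, fun z => ?_⟩
  by_cases hz : z ∈ K
  · exact hθmax z hz
  · have : f z < α := not_le.1 hz
    exact le_trans this.le hθK
end

section
/- Let f : ℝⁿ → ℝ≥0∞ be upper semicontinuous with a nonempty compact level set {f ≥ α}, and let f^ν hypo-converge to f with each f^ν upper semicontinuous and the family {f ≥ α(f^ν)} eventually uniformly bounded (all θ^ν ∈ argmax f^ν lie in a fixed compact set K for large ν). If θ^ν maximizes f^ν for each ν and θ^{ν_k} → θ̃, then lim_ν sup f^ν = sup f and θ̃ maximizes f. -/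
open MeasureTheory Filter Topology Metric Set
open scoped ENNReal NNReal

/-! Since `f^ν` attains its supremum at `θ^ν`, hypo-convergence gives
`sup f ≤ liminf sup f^ν` (lower half, at any point) and, along any subsequence whose maximizers
converge to some `θ'`, `limsup sup f^ν ≤ f θ' ≤ sup f` (upper half, at `θ'`). Hence `θ'` maximizes
`f` and the suprema converge along that subsequence; compactness of `K` provides such a
subsequence inside every subsequence, which gives convergence of the whole sequence. -/

theorem exists_tendsto_eq_comp {X : Type*} [TopologicalSpace X] {u : ℕ → ℕ} {g : ℕ → X} {x : X}
    (h : Tendsto (g ∘ u) atTop (𝓝 x)) :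
    ∃ ys : ℕ → X, Tendsto ys atTop (𝓝 x) ∧ ∀ k, ys (u k) = g (u k) := by
  classical
  refine ⟨fun ν => if ν ∈ range u then g ν else x, ?_, fun k => if_pos (mem_range_self k)⟩
  rw [← Nat.cofinite_eq_atTop] at h ⊢
  intro s hs
  -- `ys ν ∉ s` forces `ν = u k` with `g (u k) ∉ s`, and only finitely many `k` are bad
  have hbad : {k | g (u k) ∉ s}.Finite := h hs
  refine (hbad.image u).subset ?_
  rintro ν hν
  by_cases hν' : ν ∈ range u
  · obtain ⟨k, rfl⟩ := hν'
    exact ⟨k, by simpa [mem_range_self] using hν, rfl⟩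
  · have hx : (if ν ∈ range u then g ν else x) ∉ s := hν
    rw [if_neg hν'] at hx
    exact absurd (mem_of_mem_nhds hs) hx

section HypoConvergence

variable {X β : Type*} [TopologicalSpace X] [CompleteLinearOrder β] {f : X → β} {fν : ℕ → X → β}

theorem limsup_comp_le_of_hypo
    (hup : ∀ x (xs : ℕ → X), Tendsto xs atTop (𝓝 x) → limsup (fun ν => fν ν (xs ν)) atTop ≤ f x)
    {u : ℕ → ℕ} (hu : Tendsto u atTop atTop) {θs : ℕ → X} {θ : X}
    (hθ : Tendsto (θs ∘ u) atTop (𝓝 θ)) :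
    limsup (fun k => fν (u k) (θs (u k))) atTop ≤ f θ := by
  obtain ⟨ys, hys, hysθ⟩ := exists_tendsto_eq_comp hθ
  calc limsup (fun k => fν (u k) (θs (u k))) atTop
      = limsup ((fun ν => fν ν (ys ν)) ∘ u) atTop := by simp only [Function.comp_def, hysθ]
    _ ≤ limsup (fun ν => fν ν (ys ν)) atTop := hu.limsup_comp_le_limsup
    _ ≤ f θ := hup θ ys hys

theorem iSup_le_liminf_comp_iSup_of_hypo
    (hlow : ∀ x, ∃ xs : ℕ → X, Tendsto xs atTop (𝓝 x) ∧
      f x ≤ liminf (fun ν => fν ν (xs ν)) atTop)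
    {u : ℕ → ℕ} (hu : Tendsto u atTop atTop) :
    ⨆ x, f x ≤ liminf (fun k => ⨆ x, fν (u k) x) atTop := by
  refine iSup_le fun x => ?_
  obtain ⟨xs, -, hx⟩ := hlow x
  calc f x ≤ liminf (fun ν => fν ν (xs ν)) atTop := hx
    _ ≤ liminf (fun ν => ⨆ x, fν ν x) atTop :=
      liminf_le_liminf (Eventually.of_forall fun ν => le_iSup (fν ν) (xs ν))
    _ ≤ liminf ((fun ν => ⨆ x, fν ν x) ∘ u) atTop := hu.liminf_le_liminf_comp

theorem tendsto_iSup_comp_and_le_of_hypo [TopologicalSpace β] [OrderTopology β]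
    (hup : ∀ x (xs : ℕ → X), Tendsto xs atTop (𝓝 x) → limsup (fun ν => fν ν (xs ν)) atTop ≤ f x)
    (hlow : ∀ x, ∃ xs : ℕ → X, Tendsto xs atTop (𝓝 x) ∧
      f x ≤ liminf (fun ν => fν ν (xs ν)) atTop)
    {θs : ℕ → X} (hmax : ∀ ν x, fν ν x ≤ fν ν (θs ν))
    {u : ℕ → ℕ} (hu : Tendsto u atTop atTop) {θ : X} (hθ : Tendsto (θs ∘ u) atTop (𝓝 θ)) :
    Tendsto (fun k => ⨆ x, fν (u k) x) atTop (𝓝 (⨆ x, f x)) ∧ ∀ x, f x ≤ f θ := by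
  have hattained : ∀ ν, ⨆ x, fν ν x = fν ν (θs ν) :=
    fun ν => le_antisymm (iSup_le (hmax ν)) (le_iSup (fν ν) (θs ν))
  have hlimsup : limsup (fun k => ⨆ x, fν (u k) x) atTop ≤ f θ := by
    simpa only [hattained] using limsup_comp_le_of_hypo hup hu hθ
  have hliminf := iSup_le_liminf_comp_iSup_of_hypo hlow hu
  have hsup_le : ⨆ x, f x ≤ f θ := le_trans hliminf (le_trans liminf_le_limsup hlimsup)
  refine ⟨tendsto_of_le_liminf_of_limsup_le hliminf (hlimsup.trans (le_iSup f θ)), fun x => ?_⟩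
  exact (le_iSup f x).trans hsup_le

end HypoConvergence

theorem stmt10_general {n : ℕ} (f : EuclideanSpace ℝ (Fin n) → ℝ≥0∞)
    (fν : ℕ → EuclideanSpace ℝ (Fin n) → ℝ≥0∞)
    (hhypo : ∀ x : EuclideanSpace ℝ (Fin n),
      (∀ xs : ℕ → EuclideanSpace ℝ (Fin n), Tendsto xs atTop (𝓝 x) →
        limsup (fun ν => fν ν (xs ν)) atTop ≤ f x) ∧
      (∃ xs : ℕ → EuclideanSpace ℝ (Fin n), Tendsto xs atTop (𝓝 x) ∧
        f x ≤ liminf (fun ν => fν ν (xs ν)) atTop))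
    (θs : ℕ → EuclideanSpace ℝ (Fin n)) (hmax : ∀ ν x, fν ν x ≤ fν ν (θs ν))
    (K : Set (EuclideanSpace ℝ (Fin n))) (hK : IsCompact K)
    (hKev : ∀ᶠ ν in atTop, θs ν ∈ K)
    (φ : ℕ → ℕ) (hφ : StrictMono φ) (θt : EuclideanSpace ℝ (Fin n))
    (hconv : Tendsto (θs ∘ φ) atTop (𝓝 θt)) :
    Tendsto (fun ν => ⨆ x, fν ν x) atTop (𝓝 (⨆ x, f x)) ∧ ∀ x, f x ≤ f θt := by
  have hup := fun x => (hhypo x).1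
  have hlow := fun x => (hhypo x).2
  refine ⟨tendsto_of_subseq_tendsto fun ns hns => ?_,
    (tendsto_iSup_comp_and_le_of_hypo hup hlow hmax hφ.tendsto_atTop hconv).2⟩
  obtain ⟨θ, -, ms, hms, hθ⟩ := hK.tendsto_subseq' (hns.eventually hKev).frequently
  exact ⟨ms, (tendsto_iSup_comp_and_le_of_hypo hup hlow hmax
    (hns.comp hms.tendsto_atTop) hθ).1⟩

theorem stmt10 {n : ℕ} (f : EuclideanSpace ℝ (Fin n) → ℝ≥0∞)
    (fν : ℕ → EuclideanSpace ℝ (Fin n) → ℝ≥0∞)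
    (husc : UpperSemicontinuous f) (huscν : ∀ ν, UpperSemicontinuous (fν ν))
    (hhypo : ∀ x : EuclideanSpace ℝ (Fin n),
      (∀ xs : ℕ → EuclideanSpace ℝ (Fin n), Tendsto xs atTop (𝓝 x) →
        limsup (fun ν => fν ν (xs ν)) atTop ≤ f x) ∧
      (∃ xs : ℕ → EuclideanSpace ℝ (Fin n), Tendsto xs atTop (𝓝 x) ∧
        f x ≤ liminf (fun ν => fν ν (xs ν)) atTop))
    (α : ℝ≥0∞) (hcpt : IsCompact {x | α ≤ f x}) (hne : {x | α ≤ f x}.Nonempty)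
    (θs : ℕ → EuclideanSpace ℝ (Fin n)) (hmax : ∀ ν x, fν ν x ≤ fν ν (θs ν))
    (K : Set (EuclideanSpace ℝ (Fin n))) (hK : IsCompact K)
    (hKev : ∀ᶠ ν in atTop, θs ν ∈ K)
    (φ : ℕ → ℕ) (hφ : StrictMono φ) (θt : EuclideanSpace ℝ (Fin n))
    (hconv : Tendsto (θs ∘ φ) atTop (𝓝 θt)) :
    Tendsto (fun ν => ⨆ x, fν ν x) atTop (𝓝 (⨆ x, f x)) ∧ ∀ x, f x ≤ f θt :=
  stmt10_general f fν hhypo θs hmax K hK hKev φ hφ θt hconv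
end

section
/- Let f^ν, f : ℝⁿ → ℝ̄ with f upper semicontinuous. If f^ν hypo-converges to f, then limsup_ν (sup_B f^ν) ≤ sup_B f for every compact B ⊆ ℝⁿ and liminf_ν (sup_O f^ν) ≥ sup_O f for every open O ⊆ ℝⁿ. -/
open MeasureTheory Filter Topology Metric Set
open scoped ENNReal NNReal

theorem stmt11 {n : ℕ} (f : EuclideanSpace ℝ (Fin n) → EReal)
    (fν : ℕ → EuclideanSpace ℝ (Fin n) → EReal)
    (husc : UpperSemicontinuous f)
    (hhypo : ∀ x : EuclideanSpace ℝ (Fin n),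
      (∀ xs : ℕ → EuclideanSpace ℝ (Fin n), Tendsto xs atTop (𝓝 x) →
        limsup (fun ν => fν ν (xs ν)) atTop ≤ f x) ∧
      (∃ xs : ℕ → EuclideanSpace ℝ (Fin n), Tendsto xs atTop (𝓝 x) ∧
        f x ≤ liminf (fun ν => fν ν (xs ν)) atTop)) :
    (∀ B : Set (EuclideanSpace ℝ (Fin n)), IsCompact B →
      limsup (fun ν => ⨆ x ∈ B, fν ν x) atTop ≤ ⨆ x ∈ B, f x) ∧
    (∀ O : Set (EuclideanSpace ℝ (Fin n)), IsOpen O →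
      (⨆ x ∈ O, f x) ≤ liminf (fun ν => ⨆ x ∈ O, fν ν x) atTop) := by
  constructor
  · intro B hB
    by_contra hc
    push_neg at hc
    classical
    obtain ⟨a, ha1, ha2⟩ := exists_between hc
    have hfreq : ∃ᶠ ν in atTop, a < ⨆ x ∈ B, fν ν x :=
      Filter.frequently_lt_of_lt_limsup (by isBoundedDefault) ha2
    have hfreq' : ∃ᶠ ν in atTop, ∃ x ∈ B, a < fν ν x := by
      refine hfreq.mono fun ν h => ?_
      simpa [lt_iSup_iff] using h
    obtain ⟨φ, hφ, hφp⟩ := Filter.extraction_of_frequently_atTop hfreq'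
    choose xk hxkB hxk using hφp
    obtain ⟨xb, hxbB, ψ, hψ, hconv⟩ := hB.tendsto_subseq hxkB
    set m : ℕ → ℕ := φ ∘ ψ with hm
    have hmmono : StrictMono m := hφ.comp hψ
    set xs : ℕ → EuclideanSpace ℝ (Fin n) := fun ν =>
      if h : ∃ j, m j = ν then xk (ψ h.choose) else xb with hxs
    have hxsm : ∀ j, xs (m j) = xk (ψ j) := by
      intro j
      have h : ∃ j', m j' = m j := ⟨j, rfl⟩
      have hj : h.choose = j := hmmono.injective h.choose_spec
      simp only [hxs, dif_pos h, hj]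
    have htend : Tendsto xs atTop (𝓝 xb) := by
      intro U hU
      rw [mem_map, mem_atTop_sets]
      have hUev : ∀ᶠ j in atTop, (xk ∘ ψ) j ∈ U := hconv hU
      obtain ⟨J, hJ⟩ := eventually_atTop.mp hUev
      refine ⟨m J, fun ν hν => ?_⟩
      by_cases h : ∃ j, m j = ν
      · have hch := h.choose_spec
        have hJle : J ≤ h.choose := hmmono.le_iff_le.mp (by rw [hch]; exact hν)
        simpa [hxs, dif_pos h] using hJ _ hJle
      · simpa [hxs, dif_neg h] using mem_of_mem_nhds hU
    have hle : a ≤ limsup (fun ν => fν ν (xs ν)) atTop := by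
      apply Filter.le_limsup_of_frequently_le
      · rw [frequently_atTop]
        intro N
        exact ⟨m N, hmmono.le_apply, by rw [hxsm]; exact (hxk (ψ N)).le⟩
      · exact ⟨⊤, Filter.eventually_map.mpr (Filter.Eventually.of_forall fun _ => le_top)⟩
    have hfx : a ≤ f xb := hle.trans ((hhypo xb).1 xs htend)
    have hsup : f xb ≤ ⨆ x ∈ B, f x := le_iSup₂ (f := fun y _ => f y) xb hxbB
    exact absurd (hfx.trans hsup) (not_le.mpr ha1)
  · intro O hO
    refine iSup₂_le fun x hx => ?_
    obtain ⟨xs, htend, hlif⟩ := (hhypo x).2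
    refine hlif.trans ?_
    have hmem : ∀ᶠ ν in atTop, xs ν ∈ O := htend (hO.mem_nhds hx)
    exact Filter.liminf_le_liminf
      (hmem.mono fun ν h => le_iSup₂ (f := fun y _ => fν ν y) (xs ν) h)
      (by isBoundedDefault) (by isBoundedDefault)
end

section
/- There exists a continuous probability density π : ℝ → [0,1] whose unique maximizer is θ = 0, and a sequence c^ν → ∞ such that for every ν, every maximizer of θ ↦ ∫_{|z−θ| < 1/c^ν} π(z) dz lies outside (−1/2, 1/2). In particular, the sequence of Bayes estimators with 0-1 loss of radius 1/c^ν does not converge to the MAP estimator. -/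
open MeasureTheory Filter Topology Metric Set
open scoped ENNReal NNReal

/-!
The spike `1 - z² / (8 (1 + z⁴))` has its unique maximum `1` at `0` and falls off quadratically
near `0`, but returns to within `1 / (8 z²)` of `1` far away. Capping it by
`(1 + z²) · dist(z, Sᶜ)`, where `S` is `(-2, 2)` together with intervals of radius `2 / c_ν`
around `4 c_ν`, makes it integrable (since `∑ 1 / c_ν < ∞`) while leaving it unchanged on `(-1, 1)`
and on the windows of radius `r = 1 / c_ν` around `4 c_ν`. A window of radius `r` centred in
`(-1/2, 1/2)` then carries mass at most `2r - r³/24` because of the quadratic fall-off, whereas the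
window around `4 c_ν` carries at least `2r - r³/36`. Dividing by the total mass, which is at
least `1`, gives the density; `c_ν = 2 · 4^ν` is admissible.
-/

namespace MAPCounterexample

lemma integral_sq_symm (θ r : ℝ) :
    ∫ z in θ - r..θ + r, z ^ 2 = 2 * r * θ ^ 2 + 2 * r ^ 3 / 3 := by
  rw [integral_pow]; ring

lemma le_infDist_compl_of_ball_subset {α : Type*} [PseudoMetricSpace α] {s : Set α} {x : α}
    {r : ℝ} (hs : sᶜ.Nonempty) (h : ball x r ⊆ s) : r ≤ infDist x sᶜ :=
  (le_infDist hs).2 fun _ hy => not_lt.1 fun hlt => hy (h (mem_ball'.2 hlt))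

lemma setIntegral_Ioo_le_of_le_one_sub_sq {f : ℝ → ℝ} {θ r κ : ℝ} (hr : 0 ≤ r) (hκ : 0 ≤ κ)
    (hf : IntegrableOn f (Ioo (θ - r) (θ + r)))
    (hle : ∀ z ∈ Ioo (θ - r) (θ + r), f z ≤ 1 - κ * z ^ 2) :
    ∫ z in Ioo (θ - r) (θ + r), f z ≤ 2 * r - κ * (2 * r ^ 3 / 3) := by
  have hg : Continuous fun z : ℝ => κ * z ^ 2 := by fun_prop
  have hbound : ∫ z in Ioo (θ - r) (θ + r), (1 - κ * z ^ 2) =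
      2 * r - κ * (2 * r * θ ^ 2 + 2 * r ^ 3 / 3) := by
    rw [← integral_Ioc_eq_integral_Ioo, ← intervalIntegral.integral_of_le (by linarith),
      intervalIntegral.integral_sub intervalIntegrable_const (hg.intervalIntegrable _ _),
      intervalIntegral.integral_const_mul, integral_sq_symm, intervalIntegral.integral_const,
      smul_eq_mul]
    ring
  calc ∫ z in Ioo (θ - r) (θ + r), f z ≤ ∫ z in Ioo (θ - r) (θ + r), (1 - κ * z ^ 2) :=
        setIntegral_mono_on hf ((continuous_const.sub hg).integrableOn_Icc.mono_set
          Ioo_subset_Icc_self) measurableSet_Ioo hle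
    _ ≤ 2 * r - κ * (2 * r ^ 3 / 3) := by
        rw [hbound]; nlinarith [mul_nonneg (mul_nonneg hκ hr) (sq_nonneg θ)]

noncomputable def spike (z : ℝ) : ℝ := 1 - z ^ 2 / (8 * (1 + z ^ 4))

lemma two_mul_sq_le_one_add_pow_four (z : ℝ) : 2 * z ^ 2 ≤ 1 + z ^ 4 := by
  nlinarith [sq_nonneg (z ^ 2 - 1)]

lemma continuous_spike : Continuous spike :=
  continuous_const.sub <| (continuous_pow 2).div (continuous_const.mul
    (continuous_const.add (continuous_pow 4))) fun z => by positivity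

lemma spike_zero : spike 0 = 1 := by norm_num [spike]

lemma spike_lt_one {z : ℝ} (hz : z ≠ 0) : spike z < 1 :=
  sub_lt_self _ (by positivity)

lemma spike_le_one (z : ℝ) : spike z ≤ 1 :=
  sub_le_self _ (by positivity)

lemma one_sub_div_le_spike (z : ℝ) : 1 - 1 / (8 * z ^ 2) ≤ spike z := by
  rcases eq_or_ne z 0 with rfl | hz
  · norm_num [spike]
  · rw [spike, sub_le_sub_iff_left, div_le_div_iff₀ (by positivity) (by positivity)]
    nlinarith

lemma fifteen_sixteenths_le_spike (z : ℝ) : 15 / 16 ≤ spike z := by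
  have := two_mul_sq_le_one_add_pow_four z
  have : z ^ 2 / (8 * (1 + z ^ 4)) ≤ 1 / 16 := by rw [div_le_iff₀ (by positivity)]; linarith
  rw [spike]; linarith

lemma spike_le_of_abs_le_one {z : ℝ} (hz : |z| ≤ 1) : spike z ≤ 1 - z ^ 2 / 16 := by
  have h4 : z ^ 4 ≤ 1 := by
    rw [show z ^ 4 = |z| ^ 4 by rw [pow_abs, abs_of_nonneg (by positivity)]]
    exact pow_le_one₀ (abs_nonneg z) hz
  rw [spike, sub_le_sub_iff_left]
  gcongr
  linarith

def plateaus (c : ℕ → ℝ) : Set ℝ :=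
  Ioo (-2) 2 ∪ ⋃ ν, Ioo (4 * c ν - 2 / c ν) (4 * c ν + 2 / c ν)

noncomputable def rawDensity (c : ℕ → ℝ) (z : ℝ) : ℝ :=
  min (spike z) ((1 + z ^ 2) * infDist z (plateaus c)ᶜ)

structure IsAdmissible (c : ℕ → ℝ) : Prop where
  two_le : ∀ ν, 2 ≤ c ν
  summable_one_div : Summable fun ν => 1 / c ν

section

variable {c : ℕ → ℝ}

lemma ball_zero_subset_plateaus : ball 0 2 ⊆ plateaus c := by
  rw [Real.ball_eq_Ioo, zero_sub, zero_add]
  exact subset_union_left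

lemma ball_subset_plateaus (ν : ℕ) : ball (4 * c ν) (2 / c ν) ⊆ plateaus c := by
  rw [Real.ball_eq_Ioo]
  exact (subset_iUnion (fun ν => Ioo (4 * c ν - 2 / c ν) (4 * c ν + 2 / c ν)) ν).trans
    subset_union_right

lemma isOpen_plateaus : IsOpen (plateaus c) :=
  isOpen_Ioo.union (isOpen_iUnion fun _ => isOpen_Ioo)

lemma volume_plateaus_lt_top (hc : IsAdmissible c) :
    volume (plateaus c) < ∞ := by
  have hpos : ∀ ν, 0 ≤ 4 * (1 / c ν) := fun ν => by have := hc.two_le ν; positivity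
  refine measure_union_lt_top measure_Ioo_lt_top ((measure_iUnion_le _).trans_lt ?_)
  have hvol : ∀ ν, volume (Ioo (4 * c ν - 2 / c ν) (4 * c ν + 2 / c ν)) =
      ENNReal.ofReal (4 * (1 / c ν)) := fun ν => by rw [Real.volume_Ioo]; ring_nf
  simp_rw [hvol, ← ENNReal.ofReal_tsum_of_nonneg hpos (hc.summable_one_div.mul_left 4)]
  exact ENNReal.ofReal_lt_top

lemma continuous_rawDensity : Continuous (rawDensity c) :=
  continuous_spike.min ((continuous_const.add (continuous_pow 2)).mul (continuous_infDist_pt _))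

lemma rawDensity_nonneg (z : ℝ) : 0 ≤ rawDensity c z :=
  le_min ((fifteen_sixteenths_le_spike z).trans' (by norm_num))
    (mul_nonneg (by positivity) infDist_nonneg)

lemma rawDensity_le_spike (z : ℝ) : rawDensity c z ≤ spike z := min_le_left _ _

lemma rawDensity_le_indicator (z : ℝ) : rawDensity c z ≤ (plateaus c).indicator 1 z := by
  by_cases hz : z ∈ plateaus c
  · rw [indicator_of_mem hz]
    exact (rawDensity_le_spike z).trans (spike_le_one z)
  · rw [indicator_of_notMem hz, rawDensity, infDist_zero_of_mem hz, mul_zero]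
    exact min_le_right _ _

lemma integrable_rawDensity (hc : IsAdmissible c) :
    Integrable (rawDensity c) := by
  refine Integrable.mono' (g := (plateaus c).indicator 1) ?_
    continuous_rawDensity.aestronglyMeasurable (Eventually.of_forall fun z => ?_)
  · rw [integrable_indicator_iff isOpen_plateaus.measurableSet]
    exact integrableOn_const (volume_plateaus_lt_top hc).ne
  · rw [Real.norm_of_nonneg (rawDensity_nonneg z)]
    exact rawDensity_le_indicator z

lemma nonempty_compl_plateaus (hc : IsAdmissible c) :
    (plateaus c)ᶜ.Nonempty := by
  refine nonempty_compl.2 fun h => ?_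
  have := volume_plateaus_lt_top hc
  rw [h, Real.volume_univ] at this
  exact lt_irrefl _ this

lemma rawDensity_eq_spike {z : ℝ} (h : 1 ≤ (1 + z ^ 2) * infDist z (plateaus c)ᶜ) :
    rawDensity c z = spike z :=
  min_eq_left ((spike_le_one z).trans h)

lemma rawDensity_eq_spike_of_abs_le_one (hc : IsAdmissible c)
    {z : ℝ} (hz : |z| ≤ 1) : rawDensity c z = spike z := by
  have hball : ball z 1 ⊆ plateaus c :=
    (ball_subset_ball' (by rw [Real.dist_0_eq_abs]; linarith)).trans ball_zero_subset_plateaus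
  have hdist := le_infDist_compl_of_ball_subset (nonempty_compl_plateaus hc) hball
  exact rawDensity_eq_spike (by nlinarith [sq_nonneg z])

lemma rawDensity_zero (hc : IsAdmissible c) :
    rawDensity c 0 = 1 := by
  rw [rawDensity_eq_spike_of_abs_le_one hc (by norm_num), spike_zero]

lemma rawDensity_lt_one {z : ℝ} (hz : z ≠ 0) : rawDensity c z < 1 :=
  (rawDensity_le_spike z).trans_lt (spike_lt_one hz)

lemma one_sub_le_rawDensity (hc : IsAdmissible c) (ν : ℕ)
    {z : ℝ} (hz : z ∈ Ioo (4 * c ν - 1 / c ν) (4 * c ν + 1 / c ν)) :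
    1 - 1 / (72 * c ν ^ 2) ≤ rawDensity c z := by
  have hc2 := hc.two_le ν
  have hinv : 1 / c ν ≤ 1 / 2 := one_div_le_one_div_of_le (by norm_num) hc2
  have hz3 : 3 * c ν ≤ z := by linarith [hz.1]
  have hsq : 9 * c ν ^ 2 ≤ z ^ 2 := by nlinarith
  have hball : ball z (1 / c ν) ⊆ plateaus c := by
    refine (ball_subset_ball' ?_).trans (ball_subset_plateaus ν)
    have : |z - 4 * c ν| < 1 / c ν := abs_lt.2 ⟨by linarith [hz.1], by linarith [hz.2]⟩
    rw [Real.dist_eq, show 2 / c ν = 1 / c ν + 1 / c ν by ring]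
    linarith
  have hdist := le_infDist_compl_of_ball_subset (nonempty_compl_plateaus hc) hball
  have hramp : 1 ≤ (1 + z ^ 2) * infDist z (plateaus c)ᶜ := by
    calc (1 : ℝ) ≤ (1 + z ^ 2) * (1 / c ν) := by
          rw [mul_one_div, le_div_iff₀ (by linarith)]; nlinarith
      _ ≤ _ := by gcongr
  rw [rawDensity_eq_spike hramp]
  refine (one_sub_div_le_spike z).trans' ?_
  rw [sub_le_sub_iff_left]
  exact one_div_le_one_div_of_le (by positivity) (by linarith)

lemma one_le_integral_rawDensity (hc : IsAdmissible c) :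
    1 ≤ ∫ z, rawDensity c z := by
  have hcore : 15 / 16 * volume.real (Ioo (-1 : ℝ) 1) ≤ ∫ z in Ioo (-1) 1, rawDensity c z := by
    refine setIntegral_ge_of_const_le_real measurableSet_Ioo measure_Ioo_lt_top.ne (fun z hz => ?_)
      (integrable_rawDensity hc).integrableOn
    rw [rawDensity_eq_spike_of_abs_le_one hc (abs_le.2 ⟨hz.1.le, hz.2.le⟩)]
    exact fifteen_sixteenths_le_spike z
  rw [Real.volume_real_Ioo_of_le (by norm_num)] at hcore
  calc (1 : ℝ) ≤ 15 / 16 * (1 - -1) := by norm_num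
    _ ≤ _ := hcore
    _ ≤ _ := setIntegral_le_integral (integrable_rawDensity hc)
        (Eventually.of_forall rawDensity_nonneg)

lemma setIntegral_rawDensity_window_lt (hc : IsAdmissible c) (ν : ℕ)
    {θ : ℝ} (hθ : θ ∈ Ioo (-(1 : ℝ) / 2) (1 / 2)) :
    ∫ z in Ioo (θ - 1 / c ν) (θ + 1 / c ν), rawDensity c z <
      ∫ z in Ioo (4 * c ν - 1 / c ν) (4 * c ν + 1 / c ν), rawDensity c z := by
  have hc2 := hc.two_le ν
  have hr : 0 < 1 / c ν := by positivity
  have hr2 : 1 / c ν ≤ 1 / 2 := one_div_le_one_div_of_le (by norm_num) hc2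
  have hint := integrable_rawDensity hc
  have hupper : ∫ z in Ioo (θ - 1 / c ν) (θ + 1 / c ν), rawDensity c z ≤
      2 * (1 / c ν) - 1 / 16 * (2 * (1 / c ν) ^ 3 / 3) := by
    refine setIntegral_Ioo_le_of_le_one_sub_sq hr.le (by norm_num) hint.integrableOn
      fun z hz => ?_
    have hz1 : |z| ≤ 1 := abs_le.2 ⟨by linarith [hz.1, hθ.1], by linarith [hz.2, hθ.2]⟩
    linarith [rawDensity_le_spike (c := c) z, spike_le_of_abs_le_one hz1]
  have hlower := setIntegral_ge_of_const_le_real measurableSet_Ioo measure_Ioo_lt_top.ne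
    (fun z hz => one_sub_le_rawDensity hc ν hz) hint.integrableOn
  rw [Real.volume_real_Ioo_of_le (by linarith)] at hlower
  refine hupper.trans_lt (lt_of_lt_of_le ?_ hlower)
  have : 1 / (72 * c ν ^ 2) = (1 / c ν) ^ 2 / 72 := by field_simp
  rw [this]
  nlinarith [pow_pos hr 3]

noncomputable def density (c : ℕ → ℝ) (z : ℝ) : ℝ := rawDensity c z / ∫ x, rawDensity c x

lemma integral_rawDensity_pos (hc : IsAdmissible c) :
    0 < ∫ z, rawDensity c z :=
  one_pos.trans_le (one_le_integral_rawDensity hc)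

lemma continuous_density : Continuous (density c) :=
  continuous_rawDensity.div_const _

lemma density_mem_Icc (hc : IsAdmissible c) (z : ℝ) :
    density c z ∈ Icc 0 1 := by
  have hM := integral_rawDensity_pos hc
  refine ⟨div_nonneg (rawDensity_nonneg z) hM.le, (div_le_one hM).2 ?_⟩
  exact (rawDensity_le_spike z).trans ((spike_le_one z).trans (one_le_integral_rawDensity hc))

lemma integral_density (hc : IsAdmissible c) :
    ∫ z, density c z = 1 := by
  simp only [density]
  rw [integral_div, div_self (integral_rawDensity_pos hc).ne']

lemma density_lt_density_zero (hc : IsAdmissible c) {z : ℝ}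
    (hz : z ≠ 0) : density c z < density c 0 := by
  rw [density, density, rawDensity_zero hc]
  exact div_lt_div_of_pos_right (rawDensity_lt_one hz) (integral_rawDensity_pos hc)

lemma setIntegral_density_window_lt (hc : IsAdmissible c)
    (ν : ℕ) {θ : ℝ} (hθ : θ ∈ Ioo (-(1 : ℝ) / 2) (1 / 2)) :
    ∫ z in Ioo (θ - 1 / c ν) (θ + 1 / c ν), density c z <
      ∫ z in Ioo (4 * c ν - 1 / c ν) (4 * c ν + 1 / c ν), density c z := by
  simp only [density, integral_div]
  exact div_lt_div_of_pos_right (setIntegral_rawDensity_window_lt hc ν hθ)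
    (integral_rawDensity_pos hc)

end

end MAPCounterexample

open MAPCounterexample in
theorem stmt16 :
    ∃ π : ℝ → ℝ, Continuous π ∧ (∀ θ, π θ ∈ Set.Icc (0 : ℝ) 1) ∧
      (∫ θ, π θ) = 1 ∧ (∀ θ : ℝ, θ ≠ 0 → π θ < π 0) ∧
      ∃ c : ℕ → ℝ, Tendsto c atTop atTop ∧
        ∀ ν : ℕ, ∀ θ : ℝ,
          (∀ t : ℝ, ∫ z in Set.Ioo (t - 1 / c ν) (t + 1 / c ν), π z ≤
            ∫ z in Set.Ioo (θ - 1 / c ν) (θ + 1 / c ν), π z) →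
          θ ∉ Set.Ioo (-(1 : ℝ) / 2) (1 / 2) := by
  set c : ℕ → ℝ := fun ν => 2 * 4 ^ ν
  have hc : IsAdmissible c :=
    ⟨fun ν => le_mul_of_one_le_right (by norm_num) (one_le_pow₀ (by norm_num)),
      ((summable_geometric_of_lt_one (r := 1 / 4) (by norm_num) (by norm_num)).mul_left
        (1 / 2)).congr fun ν => by simp only [c]; rw [one_div_pow]; field_simp⟩
  have hc_tendsto : Tendsto c atTop atTop :=
    (tendsto_pow_atTop_atTop_of_one_lt (by norm_num)).const_mul_atTop (by norm_num)
  refine ⟨density c, continuous_density, density_mem_Icc hc, integral_density hc,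
    fun θ => density_lt_density_zero hc, c, hc_tendsto, fun ν θ hmax hθ => ?_⟩
  exact (hmax (4 * c ν)).not_gt (setIntegral_density_window_lt hc ν hθ)
end
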